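/- Let $H$ be a real Hilbert space and $A : D(A) \subset H \to H$ a positive self-adjoint operator. Let $N \ge 2$, $\tau = T/N$, and suppose $u^0, \ldots, u^N \in D(A^{1/2})$ satisfy the discrete wave equation $(\partial_\tau^2 u^n, w) + (A^{1/2} u^n, A^{1/2} w) = (f^n, w)$ for all $w \in D(A^{1/2})$ and $n = 2, \ldots, N$, where $f^2, \ldots, f^N \in H$. Then there exists a constant $C$ depending only on $T$ (and not on $\tau$, $u$, $f$) such that for all $n$, $\|A^{1/2}u^n\|^2 + \|\partial_\tau u^n\|^2 \le C\left(\|A^{1/2}u^1\|^2 + \|\partial_\tau u^1\|^2 + \tau\sum_{m=2}^N \|f^m\|^2\right)$, provided the CFL-type condition $\tau^2\|A^{1/2}w\|^2 \le \kappa^2\|w\|^2$ with $\kappa < 1$ holds on the relevant finite-dimensional subspace. -/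

import Mathlib

/-!
Testing the scheme at step `n` with `w = uⁿ - uⁿ⁻¹` and using `2⟪a - b, a⟫ ≥ ‖a‖² - ‖b‖²` for
both the velocity and the `S`-part shows that the discrete energy
`Eⁿ = ‖S uⁿ‖² + ‖∂τ uⁿ‖²` satisfies `Eⁿ ≤ Eⁿ⁻¹ + 2τ ‖fⁿ‖ √Eⁿ`: the implicit scheme is
unconditionally stable. Hence `√Eⁿ ≤ √Eⁿ⁻¹ + 2τ‖fⁿ‖`, and summing and applying Cauchy–Schwarz
with `τ N = T` gives `Eⁿ ≤ 2 E¹ + 8 T τ ∑ ‖fᵐ‖²`.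
-/

open RealInnerProductSpace Finset

lemma norm_sq_add_norm_sq_le_of_inner_sub_eq {V E : Type*} [NormedAddCommGroup V]
    [InnerProductSpace ℝ V] [NormedAddCommGroup E] [InnerProductSpace ℝ E]
    {a b : V} {p q : E} {c : ℝ} (h : ⟪a - b, a⟫ + ⟪p, p - q⟫ = c) :
    ‖a‖ ^ 2 + ‖p‖ ^ 2 ≤ ‖b‖ ^ 2 + ‖q‖ ^ 2 + 2 * c := by
  rw [inner_sub_left, inner_sub_right, real_inner_self_eq_norm_sq,
    real_inner_self_eq_norm_sq] at h
  have hab := norm_sub_sq_real a b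
  have hpq := norm_sub_sq_real p q
  rw [real_inner_comm] at hab
  nlinarith [sq_nonneg ‖a - b‖, sq_nonneg ‖p - q‖]

lemma le_add_two_mul_of_sq_le_sq_add {x y c : ℝ} (hy : 0 ≤ y) (hc : 0 ≤ c)
    (h : x ^ 2 ≤ y ^ 2 + 2 * c * x) : x ≤ y + 2 * c := by
  nlinarith

lemma le_add_sum_Icc_of_le_add {e d : ℕ → ℝ} {k N : ℕ}
    (h : ∀ m, k < m → m ≤ N → e m ≤ e (m - 1) + d m) :
    ∀ n, k ≤ n → n ≤ N → e n ≤ e k + ∑ m ∈ Icc (k + 1) n, d m := by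
  intro n hkn
  induction n, hkn using Nat.le_induction with
  | base => simp
  | succ n hkn ih =>
    intro hnN
    have hstep := h (n + 1) (by omega) hnN
    rw [Nat.add_sub_cancel] at hstep
    rw [sum_Icc_succ_top (by omega)]
    linarith [ih (by omega)]

section Scheme

variable {V E : Type*} [NormedAddCommGroup V] [InnerProductSpace ℝ V]
  [NormedAddCommGroup E] [InnerProductSpace ℝ E] (S : V →ₗ[ℝ] E) (τ : ℝ) (u : ℕ → V)

noncomputable def discreteVelocity (n : ℕ) : V :=
  τ⁻¹ • (u n - u (n - 1))

noncomputable def discreteEnergy (n : ℕ) : ℝ :=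
  ‖S (u n)‖ ^ 2 + ‖discreteVelocity τ u n‖ ^ 2

lemma discreteEnergy_nonneg (n : ℕ) : 0 ≤ discreteEnergy S τ u n := by
  unfold discreteEnergy; positivity

variable {S τ u}

lemma discreteEnergy_step_le (hτ : 0 < τ) {n : ℕ} {g : V}
    (hscheme : ∀ w : V,
      ⟪(τ ^ 2)⁻¹ • (u n - (2 : ℝ) • u (n - 1) + u (n - 2)), w⟫ + ⟪S (u n), S w⟫ = ⟪g, w⟫) :
    discreteEnergy S τ u n ≤
      discreteEnergy S τ u (n - 1) + 2 * τ * ‖g‖ * √(discreteEnergy S τ u n) := by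
  set v := discreteVelocity τ u
  have hτ0 : τ ≠ 0 := hτ.ne'
  have hincr : u n - u (n - 1) = τ • v n := by simp [v, discreteVelocity, smul_smul, hτ0]
  have hdiff : (τ ^ 2)⁻¹ • (u n - (2 : ℝ) • u (n - 1) + u (n - 2)) = τ⁻¹ • (v n - v (n - 1)) := by
    simp only [v, discreteVelocity, Nat.sub_sub, smul_sub, smul_smul, ← sq]
    module
  have htested : ⟪v n - v (n - 1), v n⟫ + ⟪S (u n), S (u n) - S (u (n - 1))⟫ = τ * ⟪g, v n⟫ := by
    calc ⟪v n - v (n - 1), v n⟫ + ⟪S (u n), S (u n) - S (u (n - 1))⟫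
        = ⟪τ⁻¹ • (v n - v (n - 1)), τ • v n⟫ + ⟪S (u n), S (τ • v n)⟫ := by
          rw [real_inner_smul_left, real_inner_smul_right, inv_mul_cancel_left₀ hτ0, ← hincr,
            map_sub]
      _ = ⟪g, τ • v n⟫ := by rw [← hdiff, ← hincr]; exact hscheme _
      _ = τ * ⟪g, v n⟫ := real_inner_smul_right _ _ _
  have hv : ‖v n‖ ≤ √(discreteEnergy S τ u n) :=
    Real.le_sqrt_of_sq_le (by simp only [discreteEnergy]; linarith [sq_nonneg ‖S (u n)‖])
  have hforcing : ⟪g, v n⟫ ≤ ‖g‖ * √(discreteEnergy S τ u n) :=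
    (real_inner_le_norm g (v n)).trans (by gcongr)
  have henergy := norm_sq_add_norm_sq_le_of_inner_sub_eq htested
  show ‖S (u n)‖ ^ 2 + ‖v n‖ ^ 2 ≤
    ‖S (u (n - 1))‖ ^ 2 + ‖v (n - 1)‖ ^ 2 + 2 * τ * ‖g‖ * √(discreteEnergy S τ u n)
  nlinarith [mul_le_mul_of_nonneg_left hforcing (by positivity : 0 ≤ 2 * τ)]

lemma sqrt_discreteEnergy_step_le (hτ : 0 < τ) {n : ℕ} {g : V}
    (hscheme : ∀ w : V,
      ⟪(τ ^ 2)⁻¹ • (u n - (2 : ℝ) • u (n - 1) + u (n - 2)), w⟫ + ⟪S (u n), S w⟫ = ⟪g, w⟫) :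
    √(discreteEnergy S τ u n) ≤ √(discreteEnergy S τ u (n - 1)) + 2 * (τ * ‖g‖) := by
  refine le_add_two_mul_of_sq_le_sq_add (Real.sqrt_nonneg _) (by positivity) ?_
  rw [Real.sq_sqrt (discreteEnergy_nonneg S τ u n),
    Real.sq_sqrt (discreteEnergy_nonneg S τ u (n - 1)), ← mul_assoc]
  exact discreteEnergy_step_le hτ hscheme

lemma discreteEnergy_le_of_scheme (hτ : 0 < τ) {N : ℕ} {f : ℕ → V}
    (hscheme : ∀ n : ℕ, 2 ≤ n → n ≤ N → ∀ w : V,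
      ⟪(τ ^ 2)⁻¹ • (u n - (2 : ℝ) • u (n - 1) + u (n - 2)), w⟫ + ⟪S (u n), S w⟫ = ⟪f n, w⟫)
    {n : ℕ} (hn : 1 ≤ n) (hnN : n ≤ N) :
    discreteEnergy S τ u n ≤
      2 * discreteEnergy S τ u 1 + 8 * (τ * N) * (τ * ∑ m ∈ Icc 2 N, ‖f m‖ ^ 2) := by
  set s := ∑ m ∈ Icc 2 N, ‖f m‖
  have hsqrt : √(discreteEnergy S τ u n) ≤ √(discreteEnergy S τ u 1) + 2 * (τ * s) := by
    have htel := le_add_sum_Icc_of_le_add (e := fun m ↦ √(discreteEnergy S τ u m))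
      (fun m hm hmN ↦ sqrt_discreteEnergy_step_le hτ (hscheme m hm hmN)) n hn hnN
    have hpartial : ∑ m ∈ Icc 2 n, ‖f m‖ ≤ s :=
      sum_le_sum_of_subset_of_nonneg (Icc_subset_Icc_right hnN) fun _ _ _ ↦ norm_nonneg _
    rw [← mul_sum, ← mul_sum] at htel
    exact htel.trans (by gcongr)
  have hcauchy : s ^ 2 ≤ N * ∑ m ∈ Icc 2 N, ‖f m‖ ^ 2 := by
    refine (sq_sum_le_card_mul_sum_sq ..).trans (mul_le_mul_of_nonneg_right ?_ ?_)
    · rw [Nat.card_Icc]; exact_mod_cast (by omega : N + 1 - 2 ≤ N)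
    · positivity
  calc discreteEnergy S τ u n = √(discreteEnergy S τ u n) ^ 2 :=
        (Real.sq_sqrt (discreteEnergy_nonneg S τ u n)).symm
    _ ≤ (√(discreteEnergy S τ u 1) + 2 * (τ * s)) ^ 2 := by gcongr
    _ ≤ 2 * (√(discreteEnergy S τ u 1) ^ 2 + (2 * (τ * s)) ^ 2) := add_sq_le
    _ = 2 * discreteEnergy S τ u 1 + 8 * τ ^ 2 * s ^ 2 := by
      rw [Real.sq_sqrt (discreteEnergy_nonneg S τ u 1)]; ring
    _ ≤ 2 * discreteEnergy S τ u 1 + 8 * τ ^ 2 * (N * ∑ m ∈ Icc 2 N, ‖f m‖ ^ 2) := by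
      gcongr
    _ = _ := by ring

end Scheme

/-- Abstract discrete energy estimate for the second-order-in-time discretization of the
wave equation: if `(∂τ²uⁿ, w) + (A^{1/2}uⁿ, A^{1/2}w) = (fⁿ, w)` for all test elements `w`
(`S` playing the role of `A^{1/2}`), then under the CFL-type condition
`τ²‖Sw‖² ≤ κ²‖w‖²` with `κ < 1`, the discrete energy is controlled by the data, with a
constant depending only on `T`. -/
theorem stmt_14 (T : ℝ) (hT : 0 < T) :
    ∃ C > 0, ∀ (V E : Type) [NormedAddCommGroup V] [InnerProductSpace ℝ V]
      [NormedAddCommGroup E] [InnerProductSpace ℝ E],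
      ∀ (S : V →ₗ[ℝ] E) (N : ℕ), 2 ≤ N →
      ∀ (u f : ℕ → V) (κ : ℝ), κ < 1 →
      (∀ w : V, (T/N)^2 * ‖S w‖^2 ≤ κ^2 * ‖w‖^2) →
      (∀ n : ℕ, 2 ≤ n → n ≤ N → ∀ w : V,
        ⟪((T/N)^2)⁻¹ • (u n - (2:ℝ) • u (n-1) + u (n-2)), w⟫ + ⟪S (u n), S w⟫ = ⟪f n, w⟫) →
      ∀ n : ℕ, 1 ≤ n → n ≤ N →
        ‖S (u n)‖^2 + ‖(T/N)⁻¹ • (u n - u (n-1))‖^2 ≤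
          C * (‖S (u 1)‖^2 + ‖(T/N)⁻¹ • (u 1 - u 0)‖^2 +
            (T/N) * ∑ m ∈ Finset.Icc 2 N, ‖f m‖^2) := by
  refine ⟨2 + 8 * T, by positivity, ?_⟩
  intro V E _ _ _ _ S N hN u f κ _ _ hscheme n hn hnN
  have hN0 : (N : ℝ) ≠ 0 := Nat.cast_ne_zero.mpr (by omega)
  have hτ : 0 < T / N := by positivity
  have hE := discreteEnergy_le_of_scheme hτ hscheme hn hnN
  rw [div_mul_cancel₀ T hN0] at hE
  have hE1 := discreteEnergy_nonneg S (T / N) u 1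
  have hforcing : 0 ≤ T / N * ∑ m ∈ Icc 2 N, ‖f m‖ ^ 2 := by positivity
  change discreteEnergy S (T / N) u n ≤
    (2 + 8 * T) * (discreteEnergy S (T / N) u 1 + T / N * ∑ m ∈ Icc 2 N, ‖f m‖ ^ 2)
  nlinarith
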